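/- Let n, k, j, i be integers with n ≥ k > 0, 0 ≤ j < n, j ≤ n (so that (n,k)∖(j) is a valid skew shape, where if j ≥ k the second row is a full row of k boxes) and i ≥ 1. Then the distribution of the major index over standard Young tableaux of skew shape (n,k)∖(j) with exactly i descents satisfies f_{(n,k)∖(j),i}(q) = q^{i²}·( [n−j choose i]_q·[k choose i]_q − [n+1 choose i]_q·[k−j−1 choose i]_q ) as polynomials in q. -/

import Mathlib

open Polynomial
open scoped Classical

noncomputable section

/-- The set of cells of the skew shape `outer \ inner`, where `outer` and `inner` are
lists of row lengths (rows and columns are 0-indexed): the cell `(r, c)` is present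
iff `inner.getD r 0 ≤ c < outer.getD r 0`. -/
def skewCells (outer inner : List ℕ) : Finset (ℕ × ℕ) :=
  ((Finset.range outer.length) ×ˢ (Finset.range (outer.foldr max 0))).filter
    (fun p => inner.getD p.1 0 ≤ p.2 ∧ p.2 < outer.getD p.1 0)

/-- `pos` encodes a standard Young tableau of skew shape `outer \ inner`:
`pos k` is the cell containing the entry `k + 1`.  The conditions say that the
entries are a bijective filling which increases left to right along rows and
top to bottom down columns. -/
def IsSYT (outer inner : List ℕ)
    (pos : Fin (skewCells outer inner).card → ↥(skewCells outer inner)) : Prop :=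
  Function.Injective pos ∧
  (∀ a b, ((pos a : ℕ × ℕ)).1 = ((pos b : ℕ × ℕ)).1 →
      ((pos a : ℕ × ℕ)).2 < ((pos b : ℕ × ℕ)).2 → a < b) ∧
  (∀ a b, ((pos a : ℕ × ℕ)).2 = ((pos b : ℕ × ℕ)).2 →
      ((pos a : ℕ × ℕ)).1 < ((pos b : ℕ × ℕ)).1 → a < b)

/-- The finite set of standard Young tableaux of skew shape `outer \ inner`. -/
def SYTs (outer inner : List ℕ) :
    Finset (Fin (skewCells outer inner).card → ↥(skewCells outer inner)) :=
  Finset.univ.filter (IsSYT outer inner)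

/-- The descent set of the tableau `pos`: the values `v` such that `v + 1` lies in a
strictly lower row than `v` (entry `v` is at index `v - 1`, entry `v+1` at index `v`). -/
def desSet (outer inner : List ℕ)
    (pos : Fin (skewCells outer inner).card → ↥(skewCells outer inner)) : Finset ℕ :=
  (Finset.range (skewCells outer inner).card).filter
    (fun v => ∃ a b : Fin (skewCells outer inner).card,
      (a : ℕ) + 1 = v ∧ (b : ℕ) = v ∧ ((pos a : ℕ × ℕ)).1 < ((pos b : ℕ × ℕ)).1)

/-- The major index of a tableau: the sum of its descents. -/
def majStat (outer inner : List ℕ)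
    (pos : Fin (skewCells outer inner).card → ↥(skewCells outer inner)) : ℕ :=
  (desSet outer inner pos).sum id

/-- The number of descents of a tableau. -/
def desStat (outer inner : List ℕ)
    (pos : Fin (skewCells outer inner).card → ↥(skewCells outer inner)) : ℕ :=
  (desSet outer inner pos).card

/-- `f_{outer∖inner, i}(q) = Σ_{τ ∈ SYT(outer∖inner), des(τ) = i} q^{maj(τ)} ∈ ℤ[q]`. -/
def fSkew (outer inner : List ℕ) (i : ℕ) : Polynomial ℤ :=
  ∑ pos ∈ (SYTs outer inner).filter (fun pos => desStat outer inner pos = i),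
    X ^ majStat outer inner pos

/-- `f_{λ, i}(q)` for a straight (non-skew) shape `λ`. -/
def fPoly (lam : List ℕ) (i : ℕ) : Polynomial ℤ := fSkew lam [] i

/-- Gaussian binomial coefficients for natural arguments, via the q-Pascal recurrence
`[M+1, N+1]_q = [M, N+1]_q + q^(M-N) [M, N]_q`, with `[M, 0]_q = 1`, `[0, N+1]_q = 0`. -/
def qBinomAux : ℕ → ℕ → Polynomial ℤ
  | _, 0 => 1
  | 0, _ + 1 => 0
  | M + 1, N + 1 => qBinomAux M (N + 1) + X ^ (M - N) * qBinomAux M N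

/-- Gaussian binomial coefficient `[M choose N]_q ∈ ℤ[q]`, with the convention that
it is `0` unless `0 ≤ N ≤ M`. -/
def qBinom (M N : ℤ) : Polynomial ℤ :=
  if 0 ≤ N ∧ N ≤ M then qBinomAux M.toNat N.toNat else 0

/-!
Reading the rows of the entries `1, 2, …` of a standard tableau of shape `(n, k) ∖ (j)` gives a
word with `n - j` letters `false` (row `0`) and `k` letters `true` (row `1`) in which every prefix
has at most `j` more `true`s than `false`s; this is a bijection onto such ballot words, and a
descent of the tableau is exactly a factor `false true` of the word. Splitting off the last two
letters, the generating function of ballot words with `a` letters `false` and `b` letters `true`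
satisfies a recurrence in `(a, b)` which is also satisfied by
`q^{i²}([a choose i][b choose i] - [a + j + 1 choose i][b - j - 1 choose i])`, because q-Pascal
expresses the mixed second difference of each product of Gaussian binomials through the same
products at `i - 1`. Both agree on the boundary, where only constant words remain.
-/

theorem qBinomAux_eq_zero_of_lt : ∀ {M N : ℕ}, M < N → qBinomAux M N = 0
  | 0, _ + 1, _ => rfl
  | M + 1, N + 1, h => by
    rw [qBinomAux, qBinomAux_eq_zero_of_lt (by omega), qBinomAux_eq_zero_of_lt (by omega),
      mul_zero, add_zero]

theorem qBinom_natCast (M N : ℕ) : qBinom M N = qBinomAux M N := by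
  unfold qBinom
  split_ifs with h
  · simp
  · rw [qBinomAux_eq_zero_of_lt (by omega)]

theorem qBinom_eq_zero_of_lt {A N : ℤ} (h : A < N) : qBinom A N = 0 :=
  if_neg (by omega)

theorem qBinom_zero_right {A : ℤ} (h : 0 ≤ A) : qBinom A 0 = 1 := by
  simp [qBinom, h, qBinomAux]

theorem qBinom_zero_left (i : ℕ) : qBinom 0 i = if i = 0 then 1 else 0 := by
  rcases i with _ | i
  · simp [qBinom_zero_right]
  · simp [qBinom_eq_zero_of_lt]

theorem qBinom_sub_qBinom_sub_one (A : ℤ) (i : ℕ) :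
    qBinom A (i + 1 : ℕ) - qBinom (A - 1) (i + 1 : ℕ) =
      X ^ (A - 1 - i).toNat * qBinom (A - 1) i := by
  obtain ⟨a, rfl⟩ | hA : (∃ a : ℕ, A = a + 1) ∨ A ≤ 0 := by
    rcases le_or_gt A 0 with h | h
    · exact .inr h
    · exact .inl ⟨(A - 1).toNat, by omega⟩
  · have : ((a : ℤ) - i).toNat = a - i := by omega
    rw [add_sub_cancel_right, this, ← Nat.cast_succ, qBinom_natCast, qBinom_natCast,
      qBinom_natCast, qBinomAux]
    ring
  · rw [qBinom_eq_zero_of_lt (by omega), qBinom_eq_zero_of_lt (by omega),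
      qBinom_eq_zero_of_lt (by omega)]
    simp

theorem X_pow_mul_qBinom_sub_mul_qBinom_sub (A B : ℤ) (hA : 1 ≤ A) (e : ℕ)
    (he : (e : ℤ) = A + B - 1) (i : ℕ) :
    X ^ (i ^ 2) * (qBinom A i - qBinom (A - 1) i) * (qBinom B i - qBinom (B - 1) i) =
      if i = 0 then 0 else
        X ^ e *
          (X ^ ((i - 1) ^ 2) * qBinom (A - 1) (i - 1 : ℕ) * qBinom (B - 1) (i - 1 : ℕ)) := by
  rcases i with _ | i
  · simp [qBinom_zero_right (show 0 ≤ A by omega), qBinom_zero_right (show 0 ≤ A - 1 by omega)]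
  rw [qBinom_sub_qBinom_sub_one, qBinom_sub_qBinom_sub_one, if_neg (Nat.succ_ne_zero i),
    Nat.add_sub_cancel]
  by_cases hAB : (i : ℤ) ≤ A - 1 ∧ (i : ℤ) ≤ B - 1
  · have hexp : (i + 1) ^ 2 + (A - 1 - i).toNat + (B - 1 - i).toNat = e + i ^ 2 := by
      zify
      rw [Int.toNat_of_nonneg (by omega), Int.toNat_of_nonneg (by omega), he]
      ring
    calc _ = X ^ ((i + 1) ^ 2 + (A - 1 - i).toNat + (B - 1 - i).toNat) *
          (qBinom (A - 1) i * qBinom (B - 1) i) := by ring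
      _ = _ := by rw [hexp]; ring
  · rcases not_and_or.mp hAB with h | h <;> simp [qBinom_eq_zero_of_lt (lt_of_not_ge h)]

/-- The right-hand side of the theorem for the shape `(a + j, b) ∖ (j)`. -/
def twoRowPoly (j : ℕ) (a b : ℤ) (i : ℕ) : ℤ[X] :=
  X ^ (i ^ 2) * (qBinom a i * qBinom b i - qBinom (a + j + 1) i * qBinom (b - j - 1) i)

theorem twoRowPoly_succ_succ (j a b i : ℕ) :
    twoRowPoly j (a + 1 : ℕ) (b + 1 : ℕ) i =
      twoRowPoly j a (b + 1 : ℕ) i + twoRowPoly j (a + 1 : ℕ) b i - twoRowPoly j a b i +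
        if i = 0 then 0 else X ^ (a + b + 1) * twoRowPoly j a b (i - 1) := by
  have h₁ := X_pow_mul_qBinom_sub_mul_qBinom_sub (a + 1) (b + 1) (by omega) (a + b + 1)
    (by push_cast; ring) i
  have h₂ := X_pow_mul_qBinom_sub_mul_qBinom_sub (a + j + 1 + 1) (b - j) (by omega)
    (a + b + 1) (by push_cast; ring) i
  simp only [twoRowPoly, Nat.cast_add, Nat.cast_one, add_sub_cancel_right] at h₁ h₂ ⊢
  rw [show (a : ℤ) + 1 + j + 1 = a + j + 1 + 1 by ring,
    show (b : ℤ) + 1 - j - 1 = b - j by ring]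
  split_ifs at h₁ h₂ ⊢ <;> linear_combination h₁ - h₂

theorem twoRowPoly_of_le (j a b i : ℕ) (hb : b ≤ j) (hab : a = 0 ∨ b = 0) :
    twoRowPoly j a b i = if i = 0 then 1 else 0 := by
  have hP : qBinom a i * qBinom b i = if i = 0 then 1 else 0 := by
    rcases hab with rfl | rfl
    · rw [Nat.cast_zero, qBinom_zero_left, mul_comm]
      split_ifs with hi <;> simp [hi, qBinom_zero_right]
    · rw [Nat.cast_zero, qBinom_zero_left]
      split_ifs with hi <;> simp [hi, qBinom_zero_right]
  rw [twoRowPoly, hP, qBinom_eq_zero_of_lt (A := b - j - 1) (N := i) (by omega)]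
  split_ifs with hi <;> simp [hi]

theorem twoRowPoly_eq_zero_of_eq (j a b i : ℕ) (h : b = a + j + 1) : twoRowPoly j a b i = 0 := by
  rw [twoRowPoly, show (b : ℤ) - j - 1 = a by omega, show (a : ℤ) + j + 1 = b by omega]
  ring

namespace BallotWord

open Finset

variable {m : ℕ}

def letter (w : Fin m → Bool) (p : ℕ) : Bool :=
  if h : p < m then w ⟨p, h⟩ else false

def ones (w : Fin m → Bool) (p : ℕ) : ℕ :=
  ∑ u ∈ range p, (letter w u).toNat

def IsBallot (j : ℕ) (w : Fin m → Bool) : Prop :=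
  ∀ p ≤ m, 2 * ones w p ≤ p + j

def descents (w : Fin m → Bool) : Finset ℕ :=
  {v ∈ range m | 0 < v ∧ letter w (v - 1) = false ∧ letter w v = true}

@[simp]
theorem letter_val (w : Fin m → Bool) (v : Fin m) : letter w v = w v := by
  simp [letter]

theorem letter_of_lt (w : Fin m → Bool) {p : ℕ} (h : p < m) : letter w p = w ⟨p, h⟩ :=
  dif_pos h

theorem letter_snoc (w : Fin m → Bool) (c : Bool) (p : ℕ) :
    letter (Fin.snoc w c) p = if p = m then c else letter w p := by
  unfold letter
  by_cases hp : p = m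
  · subst hp
    simp [Fin.snoc]
  · by_cases hpm : p < m
    · simp [Fin.snoc, hp, hpm, show p < m + 1 by omega]
    · simp [hp, hpm, show ¬p < m + 1 by omega]

theorem ones_succ (w : Fin m → Bool) (p : ℕ) : ones w (p + 1) = ones w p + (letter w p).toNat :=
  sum_range_succ _ _

theorem ones_le (w : Fin m → Bool) (p : ℕ) : ones w p ≤ p := by
  unfold ones
  simpa using sum_le_card_nsmul (range p) _ 1 fun u _ => Bool.toNat_le (letter w u)

theorem ones_le_ones_add (w : Fin m → Bool) {p q : ℕ} (h : p ≤ q) :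
    ones w p ≤ ones w q ∧ ones w q ≤ ones w p + (q - p) := by
  have hsplit := sum_range_add_sum_Ico (fun u => (letter w u).toNat) h
  have hIco : ∑ u ∈ Ico p q, (letter w u).toNat ≤ q - p := by
    simpa using sum_le_card_nsmul (Ico p q) _ 1 fun u _ => Bool.toNat_le (letter w u)
  unfold ones
  omega

theorem ones_lt_ones (w : Fin m → Bool) {u p : ℕ} (hup : u < p) (hu : letter w u = true) :
    ones w u < ones w p := by
  have := ones_le_ones_add w hup
  rw [ones_succ, hu, Bool.toNat_true] at this
  omega

theorem sub_ones_lt_sub_ones (w : Fin m → Bool) {u p : ℕ} (hup : u < p)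
    (hu : letter w u = false) :
    u - ones w u < p - ones w p := by
  have hle := ones_le_ones_add w hup
  have := ones_le w u
  rw [ones_succ, hu, Bool.toNat_false, add_zero] at hle
  omega

theorem ones_snoc_of_le (w : Fin m → Bool) (c : Bool) {p : ℕ} (h : p ≤ m) :
    ones (Fin.snoc w c) p = ones w p :=
  sum_congr rfl fun u hu => by rw [letter_snoc, if_neg (by rw [mem_range] at hu; omega)]

theorem ones_snoc (w : Fin m → Bool) (c : Bool) :
    ones (Fin.snoc w c) (m + 1) = ones w m + c.toNat := by
  rw [ones_succ, ones_snoc_of_le w c le_rfl, letter_snoc, if_pos rfl]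

theorem ones_eq_card (w : Fin m → Bool) {p : ℕ} (h : p ≤ m) :
    ones w p = #{u : Fin m | (u : ℕ) < p ∧ w u = true} := by
  calc ones w p = ∑ u ∈ range m, if u < p ∧ letter w u = true then 1 else 0 := by
        rw [← sum_range_add_sum_Ico _ h, sum_eq_zero (s := Ico p m) fun u hu => if_neg (by
          rw [mem_Ico] at hu; omega), add_zero]
        refine sum_congr rfl fun u hu => ?_
        simp only [mem_range] at hu
        cases letter w u <;> simp [hu]
    _ = _ := by
      rw [← Fin.sum_univ_eq_sum_range, card_filter]
      simp

theorem card_filter_false (w : Fin m → Bool) {p : ℕ} (h : p ≤ m) :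
    #{u : Fin m | (u : ℕ) < p ∧ w u = false} = p - ones w p := by
  have := card_filter_add_card_filter_not (s := {u : Fin m | (u : ℕ) < p}) (fun u => w u = true)
  rw [Fin.card_filter_val_lt, filter_filter, filter_filter, ← ones_eq_card w h] at this
  simp only [Bool.not_eq_true] at this
  omega

theorem isBallot_snoc (j : ℕ) (w : Fin m → Bool) (c : Bool) :
    IsBallot j (Fin.snoc w c) ↔
      IsBallot j w ∧ 2 * (ones w m + c.toNat) ≤ m + 1 + j := by
  rw [← ones_snoc]
  constructor
  · intro h
    refine ⟨fun p hp => ?_, h (m + 1) le_rfl⟩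
    rw [← ones_snoc_of_le w c hp]
    exact h p (by omega)
  · rintro ⟨h, hlast⟩ p hp
    rcases Nat.lt_or_eq_of_le hp with hp | rfl
    · rw [ones_snoc_of_le w c (by omega)]
      exact h p (by omega)
    · exact hlast

theorem mem_descents (w : Fin m → Bool) (v : ℕ) :
    v ∈ descents w ↔ v < m ∧ 0 < v ∧ letter w (v - 1) = false ∧ letter w v = true := by
  simp [descents]

theorem descents_subset (w : Fin m → Bool) : descents w ⊆ range m :=
  filter_subset _ _

theorem descents_snoc (w : Fin m → Bool) (c : Bool) :
    descents (Fin.snoc w c) =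
      if 0 < m ∧ letter w (m - 1) = false ∧ c = true then insert m (descents w)
      else descents w := by
  ext v
  rw [apply_ite (v ∈ ·), mem_insert, mem_descents, mem_descents, letter_snoc, letter_snoc]
  rcases lt_trichotomy v m with h | rfl | h
  · simp [h, h.ne, show v - 1 ≠ m by omega, show v < m + 1 by omega]
  · by_cases hv : 0 < v
    · simp [hv, show v - 1 ≠ v by omega]
    · simp [hv]
  · simp [show ¬v < m + 1 by omega, show ¬v < m by omega, h.ne']

theorem isBallot_of_forall {j : ℕ} {w : Fin m → Bool}
    (h : ∀ v : Fin m, w v = true → 2 * ones w (v + 1) ≤ v + 1 + j) : IsBallot j w := by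
  intro p hp
  induction p with
  | zero => simp [ones]
  | succ p ih =>
    have := ih (by omega)
    cases hl : w ⟨p, hp⟩
    · rw [ones_succ, letter_of_lt w hp, hl, Bool.toNat_false]
      omega
    · exact h ⟨p, hp⟩ hl

theorem IsBallot.ones_lt {j : ℕ} {w : Fin m → Bool} (hw : IsBallot j w) {b a : ℕ}
    (hba : b < a) (ha : a ≤ m) (hb : letter w b = true) : ones w b < j + (a - ones w a) := by
  have hballot := hw (b + 1) (by omega)
  have hmono := ones_le_ones_add w hba
  have := ones_le w b
  rw [ones_succ, hb, Bool.toNat_true] at hballot hmono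
  omega

theorem ones_const (M : ℕ) (c : Bool) {p : ℕ} (hp : p ≤ M) :
    ones (fun _ : Fin M => c) p = c.toNat * p := by
  rw [ones, sum_congr rfl fun u hu => by rw [letter, dif_pos (by rw [mem_range] at hu; omega)],
    sum_const, card_range, smul_eq_mul, mul_comm]

theorem descents_const (M : ℕ) (c : Bool) : descents (fun _ : Fin M => c) = ∅ := by
  ext v
  simp only [mem_descents, letter, notMem_empty, iff_false]
  rintro ⟨hv, -, h₁, h₂⟩
  rw [dif_pos (by omega)] at h₁
  rw [dif_pos hv] at h₂
  exact Bool.false_ne_true (h₁.symm.trans h₂)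

theorem eq_const_of_ones_eq (w : Fin m → Bool) (c : Bool) (h : ones w m = c.toNat * m) :
    w = fun _ => c := by
  funext v
  rw [← letter_val w v]
  cases c
  · have : ∀ u < m, letter w u = false := by simpa [ones] using h
    simpa using this v v.isLt
  · have hle : ∀ u ∈ range m, (letter w u).toNat ≤ 1 := fun u _ => Bool.toNat_le _
    simpa using (sum_eq_sum_iff_of_le hle).mp (by simpa [ones] using h) v (by simp)

def weight (j b i : ℕ) (w : Fin m → Bool) : ℤ[X] :=
  if ones w m = b ∧ IsBallot j w ∧ (descents w).card = i then X ^ (descents w).sum id else 0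

def ballotGF (j M b i : ℕ) : ℤ[X] :=
  ∑ w : Fin M → Bool, weight j b i w

theorem weight_snoc_false (j b i : ℕ) (w : Fin m → Bool) :
    weight j b i (Fin.snoc w false) = weight j b i w := by
  have hballot : IsBallot j (Fin.snoc w false) ↔ IsBallot j w := by
    rw [isBallot_snoc]
    exact ⟨And.left, fun h => ⟨h, by simpa using (h m le_rfl).trans (by omega)⟩⟩
  simp only [weight, ones_snoc, descents_snoc, hballot, Bool.toNat_false, add_zero]
  simp

theorem weight_snoc_snoc_true (j b i : ℕ) (w : Fin m → Bool) (h : 2 * (b + 1) ≤ m + 2 + j) :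
    weight j (b + 1) i (Fin.snoc (Fin.snoc w true) true) =
      weight j b i (Fin.snoc w true) := by
  have hdes : descents (Fin.snoc (Fin.snoc w true) true) =
      descents (Fin.snoc w true) := by
    rw [descents_snoc, if_neg (by simp [letter_snoc])]
  set w' : Fin (m + 1) → Bool := Fin.snoc w true
  have hcond : (ones w' (m + 1) + 1 = b + 1 ∧
      (IsBallot j w' ∧ 2 * (ones w' (m + 1) + 1) ≤ m + 1 + 1 + j)) ↔
      (ones w' (m + 1) = b ∧ IsBallot j w') :=
    ⟨fun ⟨hb, hw, _⟩ => ⟨by omega, hw⟩,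
      fun ⟨hb, hw⟩ => ⟨by omega, hw, by omega⟩⟩
  simp only [weight, ones_snoc, hdes, isBallot_snoc, Bool.toNat_true, ← and_assoc, hcond]

theorem weight_snoc_false_snoc_true (j b i : ℕ) (w : Fin m → Bool)
    (h : 2 * (b + 1) ≤ m + 2 + j) :
    weight j (b + 1) i (Fin.snoc (Fin.snoc w false) true) =
      if i = 0 then 0 else X ^ (m + 1) * weight j b (i - 1) w := by
  have hnot : m + 1 ∉ descents w := fun hm => by simpa using descents_subset w hm
  have hdes : descents (Fin.snoc (Fin.snoc w false) true) =
      insert (m + 1) (descents w) := by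
    rw [descents_snoc, if_pos (by simp [letter_snoc]), descents_snoc, if_neg (by simp)]
  have hcond : (ones w m + 1 = b + 1 ∧
      ((IsBallot j w ∧ 2 * ones w m ≤ m + 1 + j) ∧ 2 * (ones w m + 1) ≤ m + 1 + 1 + j)) ↔
      (ones w m = b ∧ IsBallot j w) :=
    ⟨fun ⟨hb, ⟨hw, _⟩, _⟩ => ⟨by omega, hw⟩,
      fun ⟨hb, hw⟩ => ⟨by omega, ⟨hw, by have := hw m le_rfl; omega⟩, by omega⟩⟩
  simp only [weight, ones_snoc, hdes, isBallot_snoc, Bool.toNat_true, Bool.toNat_false, add_zero,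
    ← and_assoc, hcond, card_insert_of_notMem hnot, sum_insert hnot, id]
  rcases i with _ | i
  · simp
  · simp [pow_add]

theorem sum_snoc_bool {M : Type*} [AddCommMonoid M] (f : (Fin (m + 1) → Bool) → M) :
    ∑ w, f w = ∑ w : Fin m → Bool, (f (Fin.snoc w false) + f (Fin.snoc w true)) := by
  rw [← (Fin.snocEquiv fun _ => Bool).sum_comp f, Fintype.sum_prod_type, Fintype.sum_bool,
    ← sum_add_distrib]
  exact sum_congr rfl fun _ _ => add_comm _ _

theorem ballotGF_succ (j m b i : ℕ) :
    ballotGF j (m + 1) b i =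
      ballotGF j m b i + ∑ w : Fin m → Bool, weight j b i (Fin.snoc w true) := by
  simp only [ballotGF, sum_snoc_bool, weight_snoc_false, sum_add_distrib]

theorem ballotGF_succ_succ (j m b i : ℕ) (h : 2 * (b + 1) ≤ m + 2 + j) :
    ballotGF j (m + 2) (b + 1) i =
      ballotGF j (m + 1) (b + 1) i + ballotGF j (m + 1) b i - ballotGF j m b i +
        if i = 0 then 0 else X ^ (m + 1) * ballotGF j m b (i - 1) := by
  rw [ballotGF_succ, sum_snoc_bool]
  simp only [weight_snoc_false_snoc_true j b i _ h, weight_snoc_snoc_true j b i _ h,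
    sum_add_distrib, ballotGF_succ j m b i]
  split_ifs <;> simp only [ballotGF, mul_sum, sum_const_zero] <;> abel

theorem ballotGF_eq_zero (j M b i : ℕ) (h : M + j < 2 * b) : ballotGF j M b i = 0 :=
  sum_eq_zero fun w _ => if_neg fun ⟨hb, hw, _⟩ => by have := hw M le_rfl; omega

theorem ballotGF_const (j M i : ℕ) (c : Bool) (hc : IsBallot j (fun _ : Fin M => c)) :
    ballotGF j M (c.toNat * M) i = if i = 0 then 1 else 0 := by
  rw [ballotGF, Fintype.sum_eq_single (fun _ => c)]
  · simp [weight, ones_const M c le_rfl, hc, descents_const, eq_comm]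
  · exact fun w hw => if_neg fun ⟨hb, _⟩ => hw (eq_const_of_ones_eq w c hb)

theorem ballotGF_eq_twoRowPoly (j : ℕ) : ∀ a b i : ℕ, b ≤ a + j + 1 →
    ballotGF j (a + b) b i = twoRowPoly j a b i
  | a, b, i, hb => by
    by_cases htop : b = a + j + 1
    · rw [ballotGF_eq_zero _ _ _ _ (by omega), twoRowPoly_eq_zero_of_eq j a b i htop]
    by_cases hbase : b ≤ j ∧ (a = 0 ∨ b = 0)
    · rw [twoRowPoly_of_le j a b i hbase.1 hbase.2]
      rcases hbase.2 with rfl | rfl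
      · simpa using ballotGF_const j b i true fun p hp => by
          rw [ones_const b true hp, Bool.toNat_true]; omega
      · simpa using ballotGF_const j a i false fun p hp => by
          rw [ones_const a false hp, Bool.toNat_false]; omega
    obtain ⟨a, rfl⟩ : ∃ a', a = a' + 1 := ⟨a - 1, by omega⟩
    obtain ⟨b, rfl⟩ : ∃ b', b = b' + 1 := ⟨b - 1, by omega⟩
    have h₁ := ballotGF_eq_twoRowPoly j a (b + 1) i (by omega)
    have h₂ := ballotGF_eq_twoRowPoly j (a + 1) b i (by omega)
    have h₃ := ballotGF_eq_twoRowPoly j a b i (by omega)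
    have h₄ := ballotGF_eq_twoRowPoly j a b (i - 1) (by omega)
    rw [← add_assoc] at h₁
    rw [add_right_comm] at h₂
    rw [show a + 1 + (b + 1) = a + b + 2 by ring, ballotGF_succ_succ j (a + b) b i (by omega),
      twoRowPoly_succ_succ, h₁, h₂, h₃, h₄]
  termination_by a b => a + b

/-- The cell of the entry `v + 1` in the tableau of shape `(n, k) ∖ (j)` whose row word is `w`. -/
def cellOf (j : ℕ) (w : Fin m → Bool) (v : Fin m) : ℕ × ℕ :=
  if w v then (1, ones w v) else (0, j + (v - ones w v))

theorem cellOf_fst (j : ℕ) (w : Fin m → Bool) (v : Fin m) :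
    (cellOf j w v).1 = if w v then 1 else 0 := by
  unfold cellOf
  split_ifs <;> rfl

theorem cellOf_snd_lt (j : ℕ) (w : Fin m → Bool) {u v : Fin m} (huv : u < v) (h : w u = w v) :
    (cellOf j w u).2 < (cellOf j w v).2 := by
  cases hu : w u
  · have := sub_ones_lt_sub_ones w huv (by rw [letter_val, hu])
    simp only [cellOf, ← h, hu, Bool.false_eq_true, ↓reduceIte]
    omega
  · simpa [cellOf, ← h, hu] using ones_lt_ones w huv (by rw [letter_val, hu])

end BallotWord

section SkewTableau

open Finset

variable {outer inner : List ℕ}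
  {pos : Fin #(skewCells outer inner) → ↥(skewCells outer inner)}

theorem mem_skewCells {p : ℕ × ℕ} :
    p ∈ skewCells outer inner ↔ p.1 < outer.length ∧ p.2 < outer.foldr max 0 ∧
      inner.getD p.1 0 ≤ p.2 ∧ p.2 < outer.getD p.1 0 := by
  simp [skewCells, and_assoc]

theorem mem_skewCells_of_le {r c c' : ℕ} (h : (r, c) ∈ skewCells outer inner)
    (h₁ : inner.getD r 0 ≤ c') (h₂ : c' ≤ c) : (r, c') ∈ skewCells outer inner := by
  rw [mem_skewCells] at h ⊢
  dsimp only at h ⊢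
  exact ⟨h.1, by omega, h₁, by omega⟩

namespace IsSYT

theorem bijective (h : IsSYT outer inner pos) : Function.Bijective pos :=
  (Fintype.bijective_iff_injective_and_card pos).mpr ⟨h.1, by simp⟩

theorem exists_coe_eq (h : IsSYT outer inner pos) {c : ℕ × ℕ}
    (hc : c ∈ skewCells outer inner) :
    ∃ u, (pos u : ℕ × ℕ) = c :=
  (h.bijective.2 ⟨c, hc⟩).imp fun _ hu => by rw [hu]

theorem eq_of_coe_eq (h : IsSYT outer inner pos) {u v} (huv : (pos u : ℕ × ℕ) = pos v) :
    u = v :=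
  h.1 (Subtype.ext huv)

/-- The cells left of `pos v` in its row hold exactly the smaller entries of that row. -/
theorem col_eq (h : IsSYT outer inner pos) (v) :
    (pos v : ℕ × ℕ).2 = inner.getD (pos v : ℕ × ℕ).1 0 +
      #{u | u < v ∧ (pos u : ℕ × ℕ).1 = (pos v : ℕ × ℕ).1} := by
  have hv := (mem_skewCells.mp (pos v).2).2.2.1
  suffices #{u | u < v ∧ (pos u : ℕ × ℕ).1 = (pos v : ℕ × ℕ).1} =
      #(Ico (inner.getD (pos v : ℕ × ℕ).1 0) (pos v : ℕ × ℕ).2) by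
    rw [this, Nat.card_Ico]
    omega
  refine card_bij (fun u _ => (pos u : ℕ × ℕ).2) (fun u hu => ?_)
    (fun u₁ hu₁ u₂ hu₂ he => ?_) fun c hc => ?_
  · obtain ⟨huv, hrow⟩ := (mem_filter.mp hu).2
    rw [mem_Ico]
    refine ⟨hrow ▸ (mem_skewCells.mp (pos u).2).2.2.1, lt_of_not_ge fun hge => ?_⟩
    rcases hge.lt_or_eq with hlt | heq
    · exact (h.2.1 v u hrow.symm hlt).not_gt huv
    · exact huv.ne (h.eq_of_coe_eq (Prod.ext hrow heq.symm))
  · exact h.eq_of_coe_eq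
      (Prod.ext ((mem_filter.mp hu₁).2.2.trans (mem_filter.mp hu₂).2.2.symm) he)
  · rw [mem_Ico] at hc
    obtain ⟨u, hu⟩ := h.exists_coe_eq (mem_skewCells_of_le (pos v).2 hc.1 hc.2.le)
    exact ⟨u, mem_filter.mpr ⟨mem_univ _, h.2.1 u v (by rw [hu]) (by rw [hu]; exact hc.2),
      by rw [hu]⟩, by rw [hu]⟩

theorem card_filter_row (h : IsSYT outer inner pos) (r : ℕ) :
    #{u | (pos u : ℕ × ℕ).1 = r} = #{c ∈ skewCells outer inner | c.1 = r} := by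
  refine card_bij (fun u _ => (pos u : ℕ × ℕ)) (fun u hu => ?_)
    (fun u _ v _ huv => h.eq_of_coe_eq huv) fun c hc => ?_
  · exact mem_filter.mpr ⟨(pos u).2, (mem_filter.mp hu).2⟩
  · obtain ⟨hcs, rfl⟩ := mem_filter.mp hc
    obtain ⟨u, rfl⟩ := h.exists_coe_eq hcs
    exact ⟨u, by simp, rfl⟩

end IsSYT

end SkewTableau

section TwoRowTableau

open Finset BallotWord

variable {n k j : ℕ}

theorem mem_skewCells_pair {p : ℕ × ℕ} :
    p ∈ skewCells [n, k] [j] ↔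
      (p.1 = 0 ∧ j ≤ p.2 ∧ p.2 < n) ∨ (p.1 = 1 ∧ p.2 < k) := by
  obtain ⟨r, c⟩ := p
  rw [mem_skewCells]
  rcases r with _ | _ | r <;>
    simp only [List.getD_cons_zero, List.getD_cons_succ, List.getD_nil, List.length_cons,
      List.length_nil, List.foldr_cons, List.foldr_nil, lt_max_iff, true_and] <;> omega

theorem card_skewCells_pair_row_one : #{c ∈ skewCells [n, k] [j] | c.1 = 1} = k := by
  have : {c ∈ skewCells [n, k] [j] | c.1 = 1} = (range k).image (Prod.mk 1) := by
    ext ⟨r, c⟩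
    simp only [mem_filter, mem_skewCells_pair, mem_image, mem_range, Prod.mk.injEq,
      exists_eq_right_right]
    omega
  rw [this, card_image_of_injective _ (Prod.mk_right_injective 1), card_range]

theorem card_skewCells_pair : #(skewCells [n, k] [j]) = n - j + k := by
  have : {c ∈ skewCells [n, k] [j] | ¬c.1 = 1} = (Ico j n).image (Prod.mk 0) := by
    ext ⟨r, c⟩
    simp only [mem_filter, mem_skewCells_pair, mem_image, mem_Ico, Prod.mk.injEq,
      exists_eq_right_right]
    omega
  rw [← card_filter_add_card_filter_not (fun c => c.1 = 1), card_skewCells_pair_row_one, this,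
    card_image_of_injective _ (Prod.mk_right_injective 0), Nat.card_Ico, add_comm]

variable {pos : Fin #(skewCells [n, k] [j]) → ↥(skewCells [n, k] [j])}

def rowWord (pos : Fin #(skewCells [n, k] [j]) → ↥(skewCells [n, k] [j])) :
    Fin #(skewCells [n, k] [j]) → Bool :=
  fun v => (pos v : ℕ × ℕ).1 = 1

theorem rowWord_eq_true_iff {v} : rowWord pos v = true ↔ (pos v : ℕ × ℕ).1 = 1 :=
  decide_eq_true_iff

theorem rowWord_eq_false_iff {v} : rowWord pos v = false ↔ (pos v : ℕ × ℕ).1 = 0 := by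
  have := mem_skewCells_pair.mp (pos v).2
  rw [rowWord, decide_eq_false_iff_not]
  omega

theorem desSet_eq_descents_rowWord
    (pos : Fin #(skewCells [n, k] [j]) → ↥(skewCells [n, k] [j])) :
    desSet [n, k] [j] pos = descents (rowWord pos) := by
  ext v
  simp only [desSet, mem_filter, mem_range, mem_descents]
  refine and_congr_right fun hv => ⟨?_, fun ⟨hv₀, h₁, h₂⟩ => ?_⟩
  · rintro ⟨a, b, rfl, hb, hab⟩
    have ha := mem_skewCells_pair.mp (pos a).2
    have hb' := mem_skewCells_pair.mp (pos b).2
    refine ⟨by omega, ?_, ?_⟩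
    · rw [Nat.add_sub_cancel, letter_val, rowWord_eq_false_iff]
      omega
    · rw [← hb, letter_val, rowWord_eq_true_iff]
      omega
  · rw [letter_of_lt _ (by omega), rowWord_eq_false_iff] at h₁
    rw [letter_of_lt _ hv, rowWord_eq_true_iff] at h₂
    exact ⟨⟨v - 1, by omega⟩, ⟨v, hv⟩, Nat.sub_add_cancel hv₀, rfl,
      by rw [h₁, h₂]; exact one_pos⟩

namespace IsSYT

theorem coe_eq_cellOf (h : IsSYT [n, k] [j] pos) (v) :
    (pos v : ℕ × ℕ) = cellOf j (rowWord pos) v := by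
  have hcol := h.col_eq v
  unfold cellOf
  cases hv : rowWord pos v
  · rw [rowWord_eq_false_iff] at hv
    rw [if_neg (by simp), ← card_filter_false _ v.isLt.le]
    refine Prod.ext hv ?_
    rw [hcol, hv]
    simp [rowWord_eq_false_iff]
  · rw [rowWord_eq_true_iff] at hv
    rw [if_pos rfl, ones_eq_card _ v.isLt.le]
    refine Prod.ext hv ?_
    rw [hcol, hv]
    simp [rowWord_eq_true_iff]

theorem ones_rowWord (h : IsSYT [n, k] [j] pos) :
    ones (rowWord pos) #(skewCells [n, k] [j]) = k := by
  rw [ones_eq_card _ le_rfl]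
  refine Eq.trans ?_ ((h.card_filter_row 1).trans card_skewCells_pair_row_one)
  simp [rowWord_eq_true_iff]

/-- If `v + 1` sits in row `1` at column `c ≥ j`, the cell `(0, c)` above it holds a smaller
entry. -/
theorem isBallot_rowWord (hkn : k ≤ n) (h : IsSYT [n, k] [j] pos) : IsBallot j (rowWord pos) := by
  refine isBallot_of_forall fun v hv => ?_
  have hcell := h.coe_eq_cellOf v
  rw [cellOf, if_pos hv] at hcell
  have hk : ones (rowWord pos) v < k := by
    have := mem_skewCells_pair.mp (hcell ▸ (pos v).2)
    omega
  have := ones_le (rowWord pos) v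
  rw [ones_succ, letter_val, hv, Bool.toNat_true]
  by_cases hj : ones (rowWord pos) v < j
  · omega
  obtain ⟨u, hu⟩ := h.exists_coe_eq (c := (0, ones (rowWord pos) v))
    (mem_skewCells_pair.mpr (.inl ⟨rfl, not_lt.mp hj, by omega⟩))
  have huv : u < v := h.2.2 u v (by rw [hu, hcell]) (by rw [hu, hcell]; exact one_pos)
  have hwu : rowWord pos u = false := by
    rw [rowWord_eq_false_iff, hu]
  have hcell' := h.coe_eq_cellOf u
  rw [hu, cellOf, if_neg (by simp [hwu])] at hcell'
  have := sub_ones_lt_sub_ones (rowWord pos) huv (by rw [letter_val, hwu])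
  have := congrArg Prod.snd hcell'
  dsimp only at this
  omega

end IsSYT

theorem cellOf_mem (w : Fin #(skewCells [n, k] [j]) → Bool)
    (hw : ones w #(skewCells [n, k] [j]) = k) (v) : cellOf j w v ∈ skewCells [n, k] [j] := by
  have hM := card_skewCells_pair (n := n) (k := k) (j := j)
  rw [mem_skewCells_pair, cellOf]
  cases hv : w v
  · have := sub_ones_lt_sub_ones w v.isLt (by rw [letter_val, hv])
    simp only [Bool.false_eq_true, ↓reduceIte, true_and]
    omega
  · have := ones_lt_ones w v.isLt (by rw [letter_val, hv])
    simp only [↓reduceIte, true_and]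
    omega

def tableauOf (w : Fin #(skewCells [n, k] [j]) → Bool)
    (hw : ones w #(skewCells [n, k] [j]) = k) :
    Fin #(skewCells [n, k] [j]) → ↥(skewCells [n, k] [j]) :=
  fun v => ⟨cellOf j w v, cellOf_mem w hw v⟩

theorem isSYT_tableauOf (w : Fin #(skewCells [n, k] [j]) → Bool)
    (hw : ones w #(skewCells [n, k] [j]) = k) (hb : IsBallot j w) :
    IsSYT [n, k] [j] (tableauOf w hw) := by
  have hrow : ∀ u v, (cellOf j w u).1 = (cellOf j w v).1 → w u = w v := by
    intro u v h
    simp only [cellOf_fst] at h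
    revert h
    cases w u <;> cases w v <;> simp
  refine ⟨fun u v huv => ?_, fun a b hr hc => ?_, fun a b hc hr => ?_⟩
  · have huv : cellOf j w u = cellOf j w v := congrArg Subtype.val huv
    by_contra hne
    rcases lt_or_gt_of_ne hne with h | h
    · exact (cellOf_snd_lt j w h (hrow u v (congrArg Prod.fst huv))).ne (congrArg Prod.snd huv)
    · exact (cellOf_snd_lt j w h (hrow v u (congrArg Prod.fst huv.symm))).ne
        (congrArg Prod.snd huv.symm)
  · change (cellOf j w a).1 = (cellOf j w b).1 at hr
    change (cellOf j w a).2 < (cellOf j w b).2 at hc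
    by_contra hab
    rcases (not_lt.mp hab).lt_or_eq with h | rfl
    · exact hc.not_gt (cellOf_snd_lt j w h (hrow a b hr).symm)
    · exact hc.false
  · change (cellOf j w a).2 = (cellOf j w b).2 at hc
    change (cellOf j w a).1 < (cellOf j w b).1 at hr
    simp only [cellOf_fst] at hr
    obtain ⟨ha, hb'⟩ : w a = false ∧ w b = true := by
      revert hr
      cases w a <;> cases w b <;> simp
    by_contra hab
    have hba : b < a := lt_of_le_of_ne (not_lt.mp hab) fun h => by simp [h, ha] at hb'
    have := hb.ones_lt hba a.isLt.le (by rw [letter_val, hb'])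
    simp only [cellOf, ha, hb', Bool.false_eq_true, ↓reduceIte] at hc
    omega

theorem rowWord_tableauOf (w : Fin #(skewCells [n, k] [j]) → Bool)
    (hw : ones w #(skewCells [n, k] [j]) = k) : rowWord (tableauOf w hw) = w :=
  funext fun v => by cases hv : w v <;> simp [rowWord, tableauOf, cellOf_fst, hv]

theorem IsSYT.tableauOf_rowWord (h : IsSYT [n, k] [j] pos) :
    tableauOf (rowWord pos) h.ones_rowWord = pos :=
  funext fun v => Subtype.ext (h.coe_eq_cellOf v).symm

theorem fSkew_pair_eq_ballotGF (hkn : k ≤ n) (i : ℕ) :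
    fSkew [n, k] [j] i = ballotGF j #(skewCells [n, k] [j]) k i := by
  simp only [fSkew, ballotGF, weight, SYTs, filter_filter, ← sum_filter]
  refine sum_bij' (fun pos _ => rowWord pos) (fun w hw => tableauOf w (mem_filter.mp hw).2.1)
    (fun pos hpos => ?_) (fun w hw => ?_) (fun pos hpos => ?_) (fun w hw => ?_) fun pos hpos => ?_
  · obtain ⟨-, hsyt, hdes⟩ := mem_filter.mp hpos
    exact mem_filter.mpr ⟨mem_univ _, hsyt.ones_rowWord, hsyt.isBallot_rowWord hkn,
      by rwa [desStat, desSet_eq_descents_rowWord] at hdes⟩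
  · obtain ⟨-, hones, hb, hdes⟩ := mem_filter.mp hw
    exact mem_filter.mpr ⟨mem_univ _, isSYT_tableauOf w hones hb,
      by rwa [desStat, desSet_eq_descents_rowWord, rowWord_tableauOf]⟩
  · exact (mem_filter.mp hpos).2.1.tableauOf_rowWord
  · exact rowWord_tableauOf w _
  · rw [majStat, desSet_eq_descents_rowWord]

end TwoRowTableau

theorem stmt5_general (n k j i : ℕ) (hkn : k ≤ n) (hj : j < n) :
    fSkew [n, k] [j] i =
      X ^ (i ^ 2) *
        (qBinom ((n : ℤ) - j) i * qBinom k i -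
          qBinom ((n : ℤ) + 1) i * qBinom ((k : ℤ) - j - 1) i) := by
  rw [fSkew_pair_eq_ballotGF hkn, card_skewCells_pair,
    BallotWord.ballotGF_eq_twoRowPoly j (n - j) k i (by omega), twoRowPoly, Nat.cast_sub hj.le,
    sub_add_cancel]

/-- For integers `n ≥ k > 0`, `0 ≤ j < n`, `i ≥ 1`,
`f_{(n,k)∖(j),i}(q) = q^{i²} · ([n-j choose i]_q [k choose i]_q
  - [n+1 choose i]_q [k-j-1 choose i]_q)`. -/
theorem stmt5 (n k j i : ℕ) (hk : 0 < k) (hkn : k ≤ n) (hj : j < n) (hi : 1 ≤ i) :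
    fSkew [n, k] [j] i =
      X ^ (i ^ 2) *
        (qBinom ((n : ℤ) - j) i * qBinom k i -
          qBinom ((n : ℤ) + 1) i * qBinom ((k : ℤ) - j - 1) i) :=
  stmt5_general n k j i hkn hj
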